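/- arXiv:2104.13336 — 4 statements merged into one kernel-verified Lean document; each statement's English description precedes it below -/
import Mathlib

section
/- The trace of the inverse of the negative discrete Dirichlet Laplacian converges to $1/6$ as the mesh size tends to zero: $\lim_{h \to 0} \mathrm{Tr}((-\Delta_h)^{-1}) = \sum_{k=1}^{\infty} \frac{1}{\pi^2 k^2} = \frac{1}{6}$. -/
/-!
Up to the factor `Z²`, the matrix is the second-difference matrix `T` (2 on the diagonal, -1 next
to it) on the interior points `1, …, Z - 1` of `{0, …, Z}`. Its inverse is the discrete Green
function `G(x, y) = min(x, y) (Z - max(x, y)) / Z`, which vanishes at the boundary and is affine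
in `x` away from `x = y`, with a unit kink there. Hence
`Tr (A⁻¹) = Z⁻² ∑ₓ x (Z - x) / Z = (1 - Z⁻²) / 6 → 1/6`, and `∑ 1 / (π² k²) = 1/6` is Basel.
-/

open Matrix Filter Topology

noncomputable section

def discreteGreen (Z x y : ℕ) : ℝ :=
  (min x y : ℕ) * ((Z : ℝ) - (max x y : ℕ)) / Z

lemma discreteGreen_zero_left (Z y : ℕ) : discreteGreen Z 0 y = 0 := by
  simp [discreteGreen]

lemma discreteGreen_self_left {Z y : ℕ} (hy : y ≤ Z) : discreteGreen Z Z y = 0 := by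
  simp [discreteGreen, max_eq_left hy]

lemma discreteGreen_secondDiff {Z : ℕ} (hZ : Z ≠ 0) (x y : ℕ) :
    2 * discreteGreen Z (x + 1) y - discreteGreen Z x y - discreteGreen Z (x + 2) y
      = if x + 1 = y then 1 else 0 := by
  have hZ' : (Z : ℝ) ≠ 0 := Nat.cast_ne_zero.mpr hZ
  unfold discreteGreen
  rcases lt_trichotomy (x + 1) y with h | h | h
  · rw [if_neg h.ne, min_eq_left h.le, min_eq_left (by omega), min_eq_left (by omega),
      max_eq_right h.le, max_eq_right (by omega), max_eq_right (by omega)]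
    push_cast
    field_simp
    ring
  · subst h
    rw [if_pos rfl, min_self, min_eq_left (by omega), min_eq_right (by omega), max_self,
      max_eq_right (by omega), max_eq_left (by omega)]
    push_cast
    field_simp
    ring
  · rw [if_neg h.ne', min_eq_right h.le, min_eq_right (by omega), min_eq_right (by omega),
      max_eq_left h.le, max_eq_left (by omega), max_eq_left (by omega)]
    push_cast
    field_simp
    ring

/-- `-h² Δ_h` for `h = 1 / (n + 1)`. -/
def secondDiffMatrix (n : ℕ) : Matrix (Fin n) (Fin n) ℝ :=
  of fun i j => if i = j then 2 else if (i : ℕ) + 1 = j ∨ (j : ℕ) + 1 = i then -1 else 0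

/-- Row `i` and column `j` stand for the grid points `i + 1` and `j + 1` of `{0, …, n + 1}`. -/
def greenMatrix (n : ℕ) : Matrix (Fin n) (Fin n) ℝ :=
  of fun i j => discreteGreen (n + 1) (i + 1) (j + 1)

lemma sum_range_ite_succ_eq {n m : ℕ} {f : ℕ → ℝ} (h₀ : f 0 = 0) (h₁ : f (n + 1) = 0)
    (hm : m ≤ n + 1) :
    ∑ k ∈ Finset.range n, (if k + 1 = m then f (k + 1) else 0) = f m := by
  cases m with
  | zero => simp [h₀]
  | succ p =>
    simp only [Nat.add_right_cancel_iff, Finset.sum_ite_eq', Finset.mem_range]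
    split_ifs
    · rfl
    · rw [show p = n by omega, h₁]

/-- The boundary conditions `f 0 = f (n + 1) = 0` make the rows `0` and `n - 1` fit the pattern. -/
lemma secondDiffMatrix_mulVec_apply {n : ℕ} {f : ℕ → ℝ} (h₀ : f 0 = 0) (h₁ : f (n + 1) = 0)
    (i : Fin n) :
    (secondDiffMatrix n *ᵥ fun k => f (k + 1)) i = 2 * f (i + 1) - f i - f (i + 2) := by
  have hterm : ∀ k : ℕ, (if (i : ℕ) = k then 2 else if (i : ℕ) + 1 = k ∨ k + 1 = i then -1 else 0)
      * f (k + 1) = 2 * (if k + 1 = i + 1 then f (k + 1) else 0)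
        - (if k + 1 = i + 2 then f (k + 1) else 0) - (if k + 1 = i then f (k + 1) else 0) := by
    intro k
    split_ifs <;> first | ring1 | (exfalso; omega)
  simp only [mulVec, dotProduct, secondDiffMatrix, of_apply, Fin.ext_iff]
  rw [Fin.sum_univ_eq_sum_range (fun k => (if (i : ℕ) = k then (2 : ℝ)
    else if (i : ℕ) + 1 = k ∨ k + 1 = i then -1 else 0) * f (k + 1)) n]
  simp only [hterm, Finset.sum_sub_distrib, ← Finset.mul_sum]
  have hi := i.isLt
  rw [sum_range_ite_succ_eq h₀ h₁ (by omega), sum_range_ite_succ_eq h₀ h₁ (by omega),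
    sum_range_ite_succ_eq h₀ h₁ (by omega)]
  ring

lemma secondDiffMatrix_mul_greenMatrix (n : ℕ) : secondDiffMatrix n * greenMatrix n = 1 := by
  ext i j
  have hcol := secondDiffMatrix_mulVec_apply (f := fun x => discreteGreen (n + 1) x (j + 1))
    (discreteGreen_zero_left _ _) (discreteGreen_self_left (by omega)) i
  rw [discreteGreen_secondDiff n.succ_ne_zero] at hcol
  simp only [one_apply, Fin.ext_iff, Nat.add_right_cancel_iff] at hcol ⊢
  exact hcol

lemma sum_range_succ_mul_sub (m n : ℕ) :
    ∑ k ∈ Finset.range n, ((k : ℝ) + 1) * (m - k)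
      = m * n * (n + 1) / 2 - (n - 1) * n * (n + 1) / 3 := by
  induction n with
  | zero => simp
  | succ n ih =>
    rw [Finset.sum_range_succ, ih]
    push_cast
    ring

lemma trace_greenMatrix (n : ℕ) : trace (greenMatrix n) = n * (n + 2) / 6 := by
  have hdiag : ∀ k : ℕ,
      discreteGreen (n + 1) (k + 1) (k + 1) = ((k : ℝ) + 1) * (n - k) / (n + 1) := by
    intro k
    simp only [discreteGreen, min_self, max_self]
    push_cast
    ring
  simp only [trace, diag, greenMatrix, of_apply, hdiag]
  rw [Fin.sum_univ_eq_sum_range (fun k => ((k : ℝ) + 1) * (n - k) / (n + 1)), ← Finset.sum_div,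
    sum_range_succ_mul_sub]
  field_simp
  ring

lemma trace_inv_sq_smul_secondDiffMatrix {Z : ℕ} (hZ : Z ≠ 0) :
    trace (((Z : ℝ) ^ 2 • secondDiffMatrix (Z - 1))⁻¹) = (1 - ((Z : ℝ) ^ 2)⁻¹) / 6 := by
  have hZ' : (Z : ℝ) ^ 2 ≠ 0 := by positivity
  have hinv : ((Z : ℝ) ^ 2 • secondDiffMatrix (Z - 1)) * (((Z : ℝ) ^ 2)⁻¹ • greenMatrix (Z - 1))
      = 1 := by
    rw [smul_mul_smul_comm, mul_inv_cancel₀ hZ', one_smul, secondDiffMatrix_mul_greenMatrix]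
  have hcast : ((Z - 1 : ℕ) : ℝ) = Z - 1 := by
    rw [Nat.cast_sub (Nat.one_le_iff_ne_zero.mpr hZ), Nat.cast_one]
  rw [inv_eq_right_inv hinv, trace_smul, trace_greenMatrix, hcast, smul_eq_mul]
  field_simp
  ring

lemma hasSum_one_div_pi_sq_mul_succ_sq :
    HasSum (fun k : ℕ => 1 / (Real.pi ^ 2 * ((k : ℝ) + 1) ^ 2)) (1 / 6) := by
  have hbasel : HasSum (fun k : ℕ => 1 / ((k : ℝ) + 1) ^ 2) (Real.pi ^ 2 / 6) := by
    have h := (hasSum_nat_add_iff (f := fun k : ℕ => 1 / (k : ℝ) ^ 2) 1).mpr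
      (by simpa using hasSum_zeta_two)
    simpa using h
  have hpi : (Real.pi ^ 2)⁻¹ * (Real.pi ^ 2 / 6) = 1 / 6 := by field_simp
  refine hpi ▸ (hbasel.mul_left (Real.pi ^ 2)⁻¹).congr_fun fun k => ?_
  rw [one_div, mul_inv, one_div]

end

/-- The trace of the inverse negative discrete Dirichlet Laplacian converges to
`1/6 = ∑ 1/(π^2 k^2)` as the mesh size tends to zero. -/
theorem stmt_2
    (A : ∀ Z : ℕ, Matrix (Fin (Z - 1)) (Fin (Z - 1)) ℝ)
    (hA : ∀ Z : ℕ, 2 ≤ Z → ∀ i j : Fin (Z - 1), A Z i j =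
      if i = j then 2 * (Z : ℝ) ^ 2
      else if (i : ℕ) + 1 = (j : ℕ) ∨ (j : ℕ) + 1 = (i : ℕ) then -((Z : ℝ) ^ 2) else 0) :
    Filter.Tendsto (fun Z : ℕ => Matrix.trace ((A Z)⁻¹)) Filter.atTop (nhds (1 / 6)) ∧
    ∑' k : ℕ, 1 / (Real.pi ^ 2 * ((k : ℝ) + 1) ^ 2) = 1 / 6 := by
  refine ⟨?_, hasSum_one_div_pi_sq_mul_succ_sq.tsum_eq⟩
  have hscale : ∀ Z, 2 ≤ Z → A Z = (Z : ℝ) ^ 2 • secondDiffMatrix (Z - 1) := by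
    intro Z hZ
    ext i j
    rw [hA Z hZ, Matrix.smul_apply, secondDiffMatrix, of_apply, smul_eq_mul]
    split_ifs <;> ring
  have htrace : (fun Z : ℕ => (1 - ((Z : ℝ) ^ 2)⁻¹) / 6) =ᶠ[atTop] fun Z => trace (A Z)⁻¹ :=
    eventually_atTop.mpr ⟨2, fun Z hZ => by
      dsimp only
      rw [hscale Z hZ, trace_inv_sq_smul_secondDiffMatrix (by omega)]⟩
  have hlim : Tendsto (fun Z : ℕ => (1 - ((Z : ℝ) ^ 2)⁻¹) / 6) atTop (𝓝 ((1 - 0) / 6)) :=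
    (((tendsto_pow_atTop two_ne_zero).comp tendsto_natCast_atTop_atTop).inv_tendsto_atTop
      |>.const_sub 1).div_const 6
  rw [sub_zero] at hlim
  exact hlim.congr' htrace
end

section
/- For $v \in \mathbb{R}^Z$, the piecewise linear prolongation $I_h^{\mathrm{ply}} v$ with respect to the midpoint grid and the piecewise constant prolongation $I_h^{\mathrm{pcy}} v$ satisfy the two-sided $L^2$ comparison $\|I_h^{\mathrm{ply}} v\|_{L^2} \leq \|I_h^{\mathrm{pcy}} v\|_{L^2} \leq 3\,\|I_h^{\mathrm{ply}} v\|_{L^2}$, and moreover $\int_0^1 I_h^{\mathrm{ply}} v\,dx = \int_0^1 I_h^{\mathrm{pcy}} v\,dx$. -/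
open MeasureTheory Set

/-!
Everything is computed cell by cell. On a cell of the midpoint grid joining the values `a`
and `b`, the linear piece has integral `h (a + b) / 2` and square integral
`h (a² + a b + b²) / 3`. Cutting each cell of the constant prolongation in half regroups its
integral and square integral as sums over the same midpoint cells, with cell terms
`h (a + b) / 2` and `h (a² + b²) / 2`; the two end half-cells contribute `h/2 · v₀` and
`h/2 · v_{Z-1}` (and their squares) to both sides. What remains is
`(a² + a b + b²) / 3 ≤ (a² + b²) / 2 ≤ 3 (a² + a b + b²)`.
-/

theorem intervalIntegrable_of_eqOn_Ico {f g : ℝ → ℝ} {a b : ℝ} (hab : a ≤ b)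
    (hg : IntervalIntegrable g volume a b) (hfg : EqOn f g (Ico a b)) :
    IntervalIntegrable f volume a b :=
  hg.congr_uIoo (by rw [uIoo_of_le hab]; exact (hfg.mono Ioo_subset_Ico_self).symm)

theorem integral_eq_of_eqOn_Ico {f g : ℝ → ℝ} {a b : ℝ} (hab : a ≤ b)
    (hfg : EqOn f g (Ico a b)) : ∫ x in a..b, f x = ∫ x in a..b, g x :=
  intervalIntegral.integral_congr_Ioo_of_le hab (hfg.mono Ioo_subset_Ico_self)

section Cells

variable {f : ℝ → ℝ} {g : ℕ → ℝ → ℝ} {a : ℕ → ℝ} {n : ℕ}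

theorem intervalIntegrable_of_eqOn_Ico_cells (ha : ∀ k < n, a k ≤ a (k + 1))
    (hg : ∀ k < n, IntervalIntegrable (g k) volume (a k) (a (k + 1)))
    (hfg : ∀ k < n, EqOn f (g k) (Ico (a k) (a (k + 1)))) :
    IntervalIntegrable f volume (a 0) (a n) :=
  IntervalIntegrable.trans_iterate fun k hk =>
    intervalIntegrable_of_eqOn_Ico (ha k hk) (hg k hk) (hfg k hk)

theorem integral_eq_sum_of_eqOn_Ico_cells (ha : ∀ k < n, a k ≤ a (k + 1))
    (hg : ∀ k < n, IntervalIntegrable (g k) volume (a k) (a (k + 1)))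
    (hfg : ∀ k < n, EqOn f (g k) (Ico (a k) (a (k + 1)))) :
    ∫ x in a 0..a n, f x = ∑ k ∈ Finset.range n, ∫ x in a k..a (k + 1), g k x := by
  rw [← intervalIntegral.sum_integral_adjacent_intervals fun k hk =>
    intervalIntegrable_of_eqOn_Ico (ha k hk) (hg k hk) (hfg k hk)]
  exact Finset.sum_congr rfl fun k hk =>
    integral_eq_of_eqOn_Ico (ha k (Finset.mem_range.1 hk)) (hfg k (Finset.mem_range.1 hk))

end Cells

theorem sum_indicator_Ico_mul_eq_of_mem {h : ℝ} (hh : 0 < h) (v : ℕ → ℝ) {n k : ℕ}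
    (hk : k < n) {x : ℝ} (hx : x ∈ Ico ((k : ℝ) * h) (((k : ℝ) + 1) * h)) :
    ∑ i ∈ Finset.range n, indicator (Ico ((i : ℝ) * h) (((i : ℝ) + 1) * h)) (fun _ => v i) x
      = v k := by
  rw [Finset.sum_eq_single_of_mem k (Finset.mem_range.2 hk), indicator_of_mem hx]
  intro i _ hne
  refine indicator_of_notMem (fun hxi => hne ?_) _
  have hik : (i : ℝ) < k + 1 := lt_of_mul_lt_mul_right (hxi.1.trans_lt hx.2) hh.le
  have hki : (k : ℝ) < i + 1 := lt_of_mul_lt_mul_right (hx.1.trans_lt hxi.2) hh.le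
  norm_cast at hik hki
  omega

theorem integral_comp_sum_indicator_Ico {h : ℝ} (hh : 0 < h) (v : ℕ → ℝ) (φ : ℝ → ℝ)
    (n : ℕ) :
    ∫ x in (0 : ℝ)..n * h, φ (∑ i ∈ Finset.range n,
        indicator (Ico ((i : ℝ) * h) (((i : ℝ) + 1) * h)) (fun _ => v i) x)
      = h * ∑ i ∈ Finset.range n, φ (v i) := by
  have hcell : ∀ k : ℕ, ((k + 1 : ℕ) : ℝ) * h = k * h + h := fun k => by push_cast; ring
  have := integral_eq_sum_of_eqOn_Ico_cells (a := fun k : ℕ => (k : ℝ) * h)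
    (g := fun k _ => φ (v k)) (n := n)
    (f := fun x => φ (∑ i ∈ Finset.range n,
      indicator (Ico ((i : ℝ) * h) (((i : ℝ) + 1) * h)) (fun _ => v i) x))
    (fun k _ => by simp only [hcell]; linarith) (fun k _ => intervalIntegrable_const)
    (fun k hk x hx => by
      rw [hcell, ← add_one_mul] at hx
      exact congrArg φ (sum_indicator_Ico_mul_eq_of_mem hh v hk hx))
  simp only [Nat.cast_zero, zero_mul, hcell, intervalIntegral.integral_const, smul_eq_mul,
    add_sub_cancel_left] at this
  rw [this, Finset.mul_sum]

theorem integral_lerp (a b h : ℝ) (hh : h ≠ 0) :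
    ∫ x in (0 : ℝ)..h, (a + (b - a) / h * x) = h * (a + b) / 2 := by
  rw [intervalIntegral.integral_add intervalIntegrable_const
      (intervalIntegral.intervalIntegrable_id.const_mul _),
    intervalIntegral.integral_const_mul, integral_id, intervalIntegral.integral_const,
    smul_eq_mul]
  field_simp
  ring

theorem integral_lerp_sq (a b h : ℝ) (hh : h ≠ 0) :
    ∫ x in (0 : ℝ)..h, (a + (b - a) / h * x) ^ 2 = h * (a ^ 2 + a * b + b ^ 2) / 3 := by
  have hexp : (fun x : ℝ => (a + (b - a) / h * x) ^ 2) =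
      fun x => a ^ 2 + (2 * a * ((b - a) / h) * x + ((b - a) / h) ^ 2 * x ^ 2) := by
    ext x; ring
  rw [hexp, intervalIntegral.integral_add intervalIntegrable_const
      (Continuous.intervalIntegrable (by fun_prop) _ _),
    intervalIntegral.integral_add (intervalIntegral.intervalIntegrable_id.const_mul _)
      (Continuous.intervalIntegrable (by fun_prop) _ _),
    intervalIntegral.integral_const_mul, intervalIntegral.integral_const_mul, integral_id,
    integral_pow, intervalIntegral.integral_const, smul_eq_mul]
  field_simp
  ring

theorem integral_comp_of_eqOn_lerp {h : ℝ} (hh : 0 < h) (v : ℕ → ℝ) {w φ : ℝ → ℝ}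
    (hφ : Continuous φ) (n : ℕ) (hw0 : ∀ x ∈ Ico 0 (h / 2), w x = v 0)
    (hwn : ∀ x ∈ Ico (((n : ℝ) + 1 / 2) * h) (((n : ℝ) + 1) * h), w x = v n)
    (hwi : ∀ i : ℕ, 1 ≤ i → i ≤ n →
      ∀ x ∈ Ico ((i : ℝ) * h - h / 2) ((i : ℝ) * h + h / 2),
      w x = v (i - 1) + (v i - v (i - 1)) / h * (x - ((i : ℝ) * h - h / 2))) :
    ∫ x in (0 : ℝ)..((n : ℝ) + 1) * h, φ (w x)
      = h / 2 * φ (v 0)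
        + (∑ k ∈ Finset.range n, ∫ x in (0 : ℝ)..h, φ (v k + (v (k + 1) - v k) / h * x))
        + h / 2 * φ (v n) := by
  set m : ℕ → ℝ := fun k => ((k : ℝ) + 1 / 2) * h with hm
  have hm_succ : ∀ k, m (k + 1) = m k + h := fun k => by simp only [hm]; push_cast; ring
  set piece : ℕ → ℝ → ℝ := fun k x => φ (v k + (v (k + 1) - v k) / h * (x - m k))
  have hpiece : ∀ k < n, EqOn (fun x => φ (w x)) (piece k) (Ico (m k) (m (k + 1))) := by
    intro k hk x hx
    simp only [hm] at hx
    push_cast at hx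
    have hwx := hwi (k + 1) (by omega) (by omega) x
      ⟨by push_cast; linarith [hx.1], by push_cast; linarith [hx.2]⟩
    simp only [Nat.add_sub_cancel] at hwx
    simp only [piece, hwx, hm]
    push_cast
    congr 1
    ring
  have hmono : ∀ k < n, m k ≤ m (k + 1) := fun k _ => by rw [hm_succ]; linarith
  have hpiece_int : ∀ k < n, IntervalIntegrable (piece k) volume (m k) (m (k + 1)) :=
    fun k _ => Continuous.intervalIntegrable (by fun_prop) _ _
  have h0 : m 0 = h / 2 := by simp only [hm]; push_cast; ring
  have hn : m n + h / 2 = ((n : ℝ) + 1) * h := by simp only [hm]; ring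
  have hleft_le : (0 : ℝ) ≤ m 0 := by rw [h0]; linarith
  have hright_le : m n ≤ m n + h / 2 := by linarith
  have hleft : EqOn (fun x => φ (w x)) (fun _ => φ (v 0)) (Ico 0 (m 0)) :=
    fun x hx => congrArg φ (hw0 x (by rwa [h0] at hx))
  have hright : EqOn (fun x => φ (w x)) (fun _ => φ (v n)) (Ico (m n) (m n + h / 2)) :=
    fun x hx => congrArg φ (hwn x (by rwa [hn] at hx))
  have hleft_int := intervalIntegrable_of_eqOn_Ico hleft_le intervalIntegrable_const hleft
  have hmid_int := intervalIntegrable_of_eqOn_Ico_cells hmono hpiece_int hpiece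
  have hright_int := intervalIntegrable_of_eqOn_Ico hright_le intervalIntegrable_const hright
  rw [← hn, ← intervalIntegral.integral_add_adjacent_intervals hleft_int
      (hmid_int.trans hright_int),
    ← intervalIntegral.integral_add_adjacent_intervals hmid_int hright_int,
    integral_eq_of_eqOn_Ico hleft_le hleft, integral_eq_of_eqOn_Ico hright_le hright,
    integral_eq_sum_of_eqOn_Ico_cells hmono hpiece_int hpiece]
  simp only [intervalIntegral.integral_const, smul_eq_mul, h0, add_sub_cancel_left, sub_zero,
    add_assoc]
  congr 2
  refine Finset.sum_congr rfl fun k _ => ?_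
  rw [intervalIntegral.integral_comp_sub_right (fun x => φ (v k + (v (k + 1) - v k) / h * x)),
    hm_succ, sub_self, add_sub_cancel_left]

theorem sum_range_succ_eq_trapezoid (f : ℕ → ℝ) (n : ℕ) :
    ∑ i ∈ Finset.range (n + 1), f i
      = f 0 / 2 + (∑ k ∈ Finset.range n, (f k + f (k + 1)) / 2) + f n / 2 := by
  rw [← Finset.sum_div, Finset.sum_add_distrib]
  linarith [Finset.sum_range_succ f n, Finset.sum_range_succ' f n]

theorem trapezoid_sq_le_sum_sq {h : ℝ} (hh : 0 ≤ h) (u : ℕ → ℝ) (n : ℕ) :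
    h / 2 * u 0 ^ 2
        + (∑ k ∈ Finset.range n, h * (u k ^ 2 + u k * u (k + 1) + u (k + 1) ^ 2) / 3)
        + h / 2 * u n ^ 2
      ≤ h * ∑ i ∈ Finset.range (n + 1), u i ^ 2 := by
  have hcell : ∑ k ∈ Finset.range n, h * (u k ^ 2 + u k * u (k + 1) + u (k + 1) ^ 2) / 3
      ≤ h * ∑ k ∈ Finset.range n, (u k ^ 2 + u (k + 1) ^ 2) / 2 := by
    rw [Finset.mul_sum]
    exact Finset.sum_le_sum fun k _ => by
      nlinarith [mul_nonneg hh (sq_nonneg (u k - u (k + 1)))]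
  rw [sum_range_succ_eq_trapezoid (u · ^ 2)]
  linarith

theorem sum_sq_le_nine_mul_trapezoid_sq {h : ℝ} (hh : 0 ≤ h) (u : ℕ → ℝ) (n : ℕ) :
    h * ∑ i ∈ Finset.range (n + 1), u i ^ 2
      ≤ 9 * (h / 2 * u 0 ^ 2
        + (∑ k ∈ Finset.range n, h * (u k ^ 2 + u k * u (k + 1) + u (k + 1) ^ 2) / 3)
        + h / 2 * u n ^ 2) := by
  have hcell : h * ∑ k ∈ Finset.range n, (u k ^ 2 + u (k + 1) ^ 2) / 2
      ≤ 9 * ∑ k ∈ Finset.range n, h * (u k ^ 2 + u k * u (k + 1) + u (k + 1) ^ 2) / 3 := by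
    rw [Finset.mul_sum, Finset.mul_sum]
    exact Finset.sum_le_sum fun k _ => by
      nlinarith [mul_nonneg hh (sq_nonneg (u k + u (k + 1))),
        mul_nonneg hh (sq_nonneg (u k)), mul_nonneg hh (sq_nonneg (u (k + 1)))]
  have h0 : 0 ≤ h / 2 * u 0 ^ 2 := by positivity
  have hn : 0 ≤ h / 2 * u n ^ 2 := by positivity
  rw [sum_range_succ_eq_trapezoid (u · ^ 2)]
  linarith

/-- Two-sided `L²` comparison of the piecewise linear and the piecewise constant
prolongations with respect to the midpoint grid, and equality of their integrals. -/
theorem stmt_12 (Z : ℕ) (hZ : 2 ≤ Z) (h : ℝ) (hh : h = 1 / (Z : ℝ)) (v : ℕ → ℝ)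
    (w : ℝ → ℝ)
    (hw0 : ∀ x ∈ Set.Ico (0:ℝ) (h / 2), w x = v 0)
    (hwZ : ∀ x ∈ Set.Icc ((Z : ℝ) * h - h / 2) 1, w x = v (Z - 1))
    (hwi : ∀ i : ℕ, 1 ≤ i → i ≤ Z - 1 →
      ∀ x ∈ Set.Ico ((i : ℝ) * h - h / 2) ((i : ℝ) * h + h / 2),
        w x = v (i - 1) + (v i - v (i - 1)) / h * (x - ((i : ℝ) * h - h / 2))) :
    let pcy : ℝ → ℝ := fun x => ∑ i ∈ Finset.range Z,
      Set.indicator (Set.Ico ((i : ℝ) * h) (((i : ℝ) + 1) * h)) (fun _ => v i) x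
    Real.sqrt (∫ x in (0:ℝ)..1, (w x) ^ 2) ≤ Real.sqrt (∫ x in (0:ℝ)..1, (pcy x) ^ 2) ∧
    Real.sqrt (∫ x in (0:ℝ)..1, (pcy x) ^ 2) ≤ 3 * Real.sqrt (∫ x in (0:ℝ)..1, (w x) ^ 2) ∧
    (∫ x in (0:ℝ)..1, w x) = ∫ x in (0:ℝ)..1, pcy x := by
  intro pcy
  obtain ⟨N, rfl⟩ : ∃ N, Z = N + 1 := ⟨Z - 1, by omega⟩
  have hh0 : 0 < h := by rw [hh]; positivity
  have hNh : ((N : ℝ) + 1) * h = 1 := by rw [hh]; push_cast; field_simp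
  have hpcy (φ : ℝ → ℝ) :
      ∫ x in (0 : ℝ)..1, φ (pcy x) = h * ∑ i ∈ Finset.range (N + 1), φ (v i) := by
    rw [← integral_comp_sum_indicator_Ico hh0 v φ (N + 1)]
    push_cast
    rw [hNh]
  simp only [Nat.add_sub_cancel] at hwZ hwi
  have hw (φ : ℝ → ℝ) (hφ : Continuous φ) :
      ∫ x in (0 : ℝ)..1, φ (w x) = h / 2 * φ (v 0)
        + (∑ k ∈ Finset.range N, ∫ x in (0 : ℝ)..h, φ (v k + (v (k + 1) - v k) / h * x))
        + h / 2 * φ (v N) := by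
    rw [← hNh]
    exact integral_comp_of_eqOn_lerp hh0 v hφ N hw0
      (fun x hx => hwZ x ⟨by push_cast; linarith [hx.1], by linarith [hx.2]⟩) hwi
  have hw1 := hw id continuous_id
  have hw2 := hw (· ^ 2) (continuous_pow 2)
  simp only [id, integral_lerp _ _ _ hh0.ne', integral_lerp_sq _ _ _ hh0.ne'] at hw1 hw2
  have hp1 := hpcy id
  have hp2 := hpcy (· ^ 2)
  simp only [id] at hp1 hp2
  rw [hw1, hw2, hp1, hp2]
  refine ⟨Real.sqrt_le_sqrt (trapezoid_sq_le_sum_sq hh0.le v N), ?_, ?_⟩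
  · calc _ ≤ Real.sqrt (9 * _) :=
          Real.sqrt_le_sqrt (sum_sq_le_nine_mul_trapezoid_sq hh0.le v N)
      _ = _ := by rw [Real.sqrt_mul (by norm_num), show (9 : ℝ) = 3 ^ 2 by norm_num,
          Real.sqrt_sq (by norm_num)]
  · rw [sum_range_succ_eq_trapezoid, mul_add, mul_add, Finset.mul_sum]
    simp only [mul_div_assoc']
    ring
end

section
/- For every grid function $u \in \mathbb{R}^{Z-1}$, the discrete negative-norm and the $H^{-1}$ norm of the piecewise constant prolongation are equivalent with constants independent of $h$: $\|I_h^{\mathrm{pcx}} u\|_{H^{-1}} \leq \|u\|_{-1} \leq 3\,\|I_h^{\mathrm{pcx}} u\|_{H^{-1}}$. -/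
open MeasureTheory intervalIntegral Set

lemma indic_intable (a b c : ℝ) (x y : ℝ) :
    IntervalIntegrable ((Set.Ico a b).indicator (fun _ => c)) volume x y := by
  apply MeasureTheory.Integrable.intervalIntegrable
  rw [MeasureTheory.integrable_indicator_iff measurableSet_Ico]
  exact integrableOn_const measure_Ico_lt_top.ne

lemma indic_integral (a b c x : ℝ) (ha : 0 ≤ a) (hab : a ≤ b) (hx : 0 ≤ x) :
    ∫ t in (0:ℝ)..x, (Set.Ico a b).indicator (fun _ => c) t
      = c * (min x b - min x a) := by
  rw [intervalIntegral.integral_of_le hx]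
  have h1 : ∫ t in Set.Ioc 0 x, (Set.Ico a b).indicator (fun _ => c) t
      = ∫ t in Set.Ioc 0 x, (Set.Ioc a b).indicator (fun _ => c) t := by
    apply MeasureTheory.integral_congr_ae
    have h2 : (Set.Ico a b : Set ℝ) =ᵐ[volume] Set.Ioc a b := MeasureTheory.Ico_ae_eq_Ioc
    exact (MeasureTheory.ae_restrict_of_ae (h2.mono fun t ht => by
      simp only [Set.indicator_apply]
      exact if_congr (iff_of_eq ht) rfl rfl))
  rw [h1, MeasureTheory.setIntegral_indicator measurableSet_Ioc]
  rw [Set.Ioc_inter_Ioc, MeasureTheory.setIntegral_const]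
  rw [measureReal_def, Real.volume_Ioc, smul_eq_mul, mul_comm, sup_eq_right.mpr ha]
  rcases le_or_gt x a with hxa | hxa
  · rw [min_eq_left (le_trans hxa hab), min_eq_left hxa, sub_self, mul_zero,
      ENNReal.ofReal_eq_zero.2 (by rw [sub_nonpos]; exact hxa)]
    simp
  · rw [min_eq_right hxa.le, min_comm, ENNReal.toReal_ofReal
      (sub_nonneg.2 (le_min hab hxa.le))]

lemma phi_cont (h p : ℝ) : Continuous (fun x : ℝ => min x (p+h) - min x p) :=
  (continuous_id.min continuous_const).sub (continuous_id.min continuous_const)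

lemma int_phi (h p : ℝ) (hh : 0 < h) (hp : 0 ≤ p) (hp1 : p + h ≤ 1) :
    ∫ x in (0:ℝ)..1, (min x (p+h) - min x p) = h*(1 - p - h/2) := by
  have hint : ∀ y z : ℝ, IntervalIntegrable (fun x : ℝ => min x (p+h) - min x p) volume y z :=
    fun y z => (phi_cont h p).intervalIntegrable y z
  have hsplit : ∫ x in (0:ℝ)..1, (min x (p+h) - min x p)
      = (∫ x in (0:ℝ)..p, (min x (p+h) - min x p))
        + (∫ x in p..(p+h), (min x (p+h) - min x p))
        + (∫ x in (p+h)..1, (min x (p+h) - min x p)) := by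
    rw [intervalIntegral.integral_add_adjacent_intervals (hint 0 p) (hint p (p+h)),
      intervalIntegral.integral_add_adjacent_intervals (hint 0 (p+h)) (hint (p+h) 1)]
  rw [hsplit]
  have e1 : (∫ x in (0:ℝ)..p, (min x (p+h) - min x p)) = 0 := by
    rw [intervalIntegral.integral_congr (g := fun _ => (0:ℝ)) ?_, intervalIntegral.integral_zero]
    intro x hx
    rw [Set.uIcc_of_le hp] at hx
    have : x ≤ p := hx.2
    simp only []
    rw [min_eq_left (by linarith), min_eq_left this, sub_self]
  have e2 : (∫ x in p..(p+h), (min x (p+h) - min x p)) = h^2/2 := by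
    rw [intervalIntegral.integral_congr (g := fun x => x - p) ?_]
    · rw [integral_comp_sub_right (fun y => y) p]
      simp [integral_id]
    · intro x hx
      rw [Set.uIcc_of_le (by linarith)] at hx
      simp only []
      rw [min_eq_left hx.2, min_eq_right hx.1]
  have e3 : (∫ x in (p+h)..1, (min x (p+h) - min x p)) = (1-(p+h))*h := by
    rw [intervalIntegral.integral_congr (g := fun _ => h) ?_]
    · simp [smul_eq_mul]
    · intro x hx
      rw [Set.uIcc_of_le hp1] at hx
      simp only []
      rw [min_eq_right hx.1, min_eq_right (by linarith [hx.1])]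
      ring
  rw [e1, e2, e3]; ring

lemma int_phiphi_lt (h p q : ℝ) (hh : 0 < h) (hp : 0 ≤ p) (hpq : p + h ≤ q) (hq1 : q + h ≤ 1) :
    ∫ x in (0:ℝ)..1, (min x (p+h) - min x p) * (min x (q+h) - min x q)
      = h^2*(1-q-h) + h^3/2 := by
  have hq : 0 ≤ q := by linarith
  have hint : ∀ y z : ℝ, IntervalIntegrable
      (fun x : ℝ => (min x (p+h) - min x p) * (min x (q+h) - min x q)) volume y z :=
    fun y z => ((phi_cont h p).mul (phi_cont h q)).intervalIntegrable y z
  have hsplit : ∫ x in (0:ℝ)..1, (min x (p+h) - min x p) * (min x (q+h) - min x q)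
      = (∫ x in (0:ℝ)..q, (min x (p+h) - min x p) * (min x (q+h) - min x q))
        + (∫ x in q..(q+h), (min x (p+h) - min x p) * (min x (q+h) - min x q))
        + (∫ x in (q+h)..1, (min x (p+h) - min x p) * (min x (q+h) - min x q)) := by
    rw [intervalIntegral.integral_add_adjacent_intervals (hint 0 q) (hint q (q+h)),
      intervalIntegral.integral_add_adjacent_intervals (hint 0 (q+h)) (hint (q+h) 1)]
  rw [hsplit]
  have e1 : (∫ x in (0:ℝ)..q, (min x (p+h) - min x p) * (min x (q+h) - min x q)) = 0 := by
    rw [intervalIntegral.integral_congr (g := fun _ => (0:ℝ)) ?_, intervalIntegral.integral_zero]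
    intro x hx
    rw [Set.uIcc_of_le hq] at hx
    simp only []
    rw [min_eq_left (by linarith [hx.2] : x ≤ q + h), min_eq_left hx.2, sub_self, mul_zero]
  have e2 : (∫ x in q..(q+h), (min x (p+h) - min x p) * (min x (q+h) - min x q)) = h * (h^2/2) := by
    rw [intervalIntegral.integral_congr (g := fun x => h * (x - q)) ?_]
    · rw [intervalIntegral.integral_const_mul, integral_comp_sub_right (fun y => y) q]
      simp [integral_id]
    · intro x hx
      rw [Set.uIcc_of_le (by linarith)] at hx
      simp only []
      rw [min_eq_right (by linarith [hx.1] : p + h ≤ x), min_eq_right (by linarith [hx.1] : p ≤ x),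
        min_eq_left hx.2, min_eq_right hx.1]
      ring
  have e3 : (∫ x in (q+h)..1, (min x (p+h) - min x p) * (min x (q+h) - min x q)) = (1-(q+h))*(h*h) := by
    rw [intervalIntegral.integral_congr (g := fun _ => h*h) ?_]
    · simp [smul_eq_mul]; ring
    · intro x hx
      rw [Set.uIcc_of_le hq1] at hx
      simp only []
      rw [min_eq_right (by linarith [hx.1] : p + h ≤ x), min_eq_right (by linarith [hx.1] : p ≤ x),
        min_eq_right hx.1, min_eq_right (by linarith [hx.1] : q ≤ x)]
      ring
  rw [e1, e2, e3]; ring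

lemma int_phiphi_eq (h p : ℝ) (hh : 0 < h) (hp : 0 ≤ p) (hp1 : p + h ≤ 1) :
    ∫ x in (0:ℝ)..1, (min x (p+h) - min x p) * (min x (p+h) - min x p)
      = h^2*(1-p-h) + h^3/3 := by
  have hint : ∀ y z : ℝ, IntervalIntegrable
      (fun x : ℝ => (min x (p+h) - min x p) * (min x (p+h) - min x p)) volume y z :=
    fun y z => ((phi_cont h p).mul (phi_cont h p)).intervalIntegrable y z
  have hsplit : ∫ x in (0:ℝ)..1, (min x (p+h) - min x p) * (min x (p+h) - min x p)
      = (∫ x in (0:ℝ)..p, (min x (p+h) - min x p) * (min x (p+h) - min x p))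
        + (∫ x in p..(p+h), (min x (p+h) - min x p) * (min x (p+h) - min x p))
        + (∫ x in (p+h)..1, (min x (p+h) - min x p) * (min x (p+h) - min x p)) := by
    rw [intervalIntegral.integral_add_adjacent_intervals (hint 0 p) (hint p (p+h)),
      intervalIntegral.integral_add_adjacent_intervals (hint 0 (p+h)) (hint (p+h) 1)]
  rw [hsplit]
  have e1 : (∫ x in (0:ℝ)..p, (min x (p+h) - min x p) * (min x (p+h) - min x p)) = 0 := by
    rw [intervalIntegral.integral_congr (g := fun _ => (0:ℝ)) ?_, intervalIntegral.integral_zero]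
    intro x hx
    rw [Set.uIcc_of_le hp] at hx
    simp only []
    rw [min_eq_left (by linarith [hx.2] : x ≤ p + h), min_eq_left hx.2, sub_self, mul_zero]
  have e2 : (∫ x in p..(p+h), (min x (p+h) - min x p) * (min x (p+h) - min x p)) = h^3/3 := by
    rw [intervalIntegral.integral_congr (g := fun x => (x - p)^2) ?_]
    · rw [integral_comp_sub_right (fun y => y^2) p]
      simp [integral_pow]
      ring
    · intro x hx
      rw [Set.uIcc_of_le (by linarith)] at hx
      simp only []
      rw [min_eq_left hx.2, min_eq_right hx.1]
      ring
  have e3 : (∫ x in (p+h)..1, (min x (p+h) - min x p) * (min x (p+h) - min x p)) = (1-(p+h))*(h*h) := by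
    rw [intervalIntegral.integral_congr (g := fun _ => h*h) ?_]
    · simp [smul_eq_mul]; ring
    · intro x hx
      rw [Set.uIcc_of_le hp1] at hx
      simp only []
      rw [min_eq_right hx.1, min_eq_right (by linarith [hx.1] : p ≤ x)]
      ring
  rw [e1, e2, e3]; ring

lemma sumA (n : ℕ) (h : ℝ) (A : Matrix (Fin n) (Fin n) ℝ)
    (hA : ∀ i j : Fin n, A i j =
      if i = j then 2 / h ^ 2
      else if (i : ℕ) + 1 = (j : ℕ) ∨ (j : ℕ) + 1 = (i : ℕ) then -(1 / h ^ 2) else 0)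
    (c : Fin n → ℝ) (C : ℕ → ℝ) (hC : ∀ j : Fin n, C ((j:ℕ)+1) = c j)
    (hC0 : C 0 = 0) (hCn : C (n+1) = 0) (i : Fin n) :
    ∑ j, A i j * c j = (2 * C ((i:ℕ)+1) - C (i:ℕ) - C ((i:ℕ)+2)) / h^2 := by
  have split : ∀ j : Fin n, A i j * c j =
      (if j = i then 2/h^2 * c j else 0)
      + (if (j:ℕ) = (i:ℕ)+1 then -(1/h^2) * c j else 0)
      + (if (j:ℕ)+1 = (i:ℕ) then -(1/h^2) * c j else 0) := by
    intro j
    rw [hA]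
    simp only [Fin.ext_iff]
    split_ifs <;> first | omega | ring
  rw [Finset.sum_congr rfl (fun j _ => split j), Finset.sum_add_distrib,
    Finset.sum_add_distrib]
  have S1 : ∑ j : Fin n, (if j = i then 2/h^2 * c j else 0) = 2/h^2 * C ((i:ℕ)+1) := by
    rw [Finset.sum_ite_eq' Finset.univ i (fun j => 2/h^2 * c j), if_pos (Finset.mem_univ i), hC]
  have S2 : ∑ j : Fin n, (if (j:ℕ) = (i:ℕ)+1 then -(1/h^2) * c j else 0)
      = -(1/h^2) * C ((i:ℕ)+2) := by
    by_cases hlt : (i:ℕ)+1 < n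
    · rw [Finset.sum_eq_single_of_mem (⟨(i:ℕ)+1, hlt⟩ : Fin n) (Finset.mem_univ _) ?_]
      · rw [if_pos rfl, ← hC ⟨(i:ℕ)+1, hlt⟩]
      · intro j _ hne
        exact if_neg (fun hval => hne (Fin.ext hval))
    · rw [Finset.sum_eq_zero (fun j _ => if_neg (by have := j.isLt; omega))]
      have hin : (i:ℕ)+2 = n+1 := by have := i.isLt; omega
      rw [hin, hCn, mul_zero]
  have S3 : ∑ j : Fin n, (if (j:ℕ)+1 = (i:ℕ) then -(1/h^2) * c j else 0)
      = -(1/h^2) * C (i:ℕ) := by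
    by_cases hpos : 1 ≤ (i:ℕ)
    · have hlt : (i:ℕ)-1 < n := by have := i.isLt; omega
      rw [Finset.sum_eq_single_of_mem (⟨(i:ℕ)-1, hlt⟩ : Fin n) (Finset.mem_univ _) ?_]
      · rw [if_pos (by simp only [Fin.val_mk]; omega), ← hC ⟨(i:ℕ)-1, hlt⟩]
        have hv : (⟨(i:ℕ)-1, hlt⟩ : Fin n).val + 1 = (i:ℕ) := by
          show (i:ℕ)-1+1 = (i:ℕ); omega
        rw [hv]
      · intro j _ hne
        exact if_neg (fun hval => hne (Fin.ext (by simp only [Fin.val_mk]; omega)))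
    · rw [Finset.sum_eq_zero (fun j _ => if_neg (by omega))]
      have : (i:ℕ) = 0 := by omega
      rw [this, hC0, mul_zero]
  rw [S1, S2, S3]
  ring

lemma gam_diff (Zr : ℝ) (i k : ℕ) :
    2 * (((min (i+1) (k+1) : ℕ):ℝ) * (Zr - ((max (i+1) (k+1) : ℕ):ℝ)))
      - ((min i (k+1) : ℕ):ℝ) * (Zr - ((max i (k+1) : ℕ):ℝ))
      - ((min (i+2) (k+1) : ℕ):ℝ) * (Zr - ((max (i+2) (k+1) : ℕ):ℝ))
      = if i = k then Zr else 0 := by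
  rcases lt_trichotomy i k with hik | hik | hik
  · rw [if_neg (by omega), show min (i+1) (k+1) = i+1 by omega,
      show max (i+1) (k+1) = k+1 by omega, show min i (k+1) = i by omega,
      show max i (k+1) = k+1 by omega, show min (i+2) (k+1) = i+2 by omega,
      show max (i+2) (k+1) = k+1 by omega]
    push_cast; ring
  · subst hik
    rw [if_pos rfl, show min (i+1) (i+1) = i+1 by omega,
      show max (i+1) (i+1) = i+1 by omega, show min i (i+1) = i by omega,
      show max i (i+1) = i+1 by omega, show min (i+2) (i+1) = i+1 by omega,
      show max (i+2) (i+1) = i+2 by omega]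
    push_cast; ring
  · rw [if_neg (by omega), show min (i+1) (k+1) = k+1 by omega,
      show max (i+1) (k+1) = i+1 by omega, show min i (k+1) = k+1 by omega,
      show max i (k+1) = i by omega, show min (i+2) (k+1) = k+1 by omega,
      show max (i+2) (k+1) = i+2 by omega]
    push_cast; ring

set_option maxHeartbeats 1000000 in
/-- Equivalence of the discrete negative norm `‖u‖₋₁` and the `H⁻¹` norm of the
piecewise constant prolongation, with constants independent of `h`. The `H⁻¹` norm of
an `L²` function `f` is computed as the `L²` norm of the mean-zero primitive of `f`. -/
theorem stmt_14 (Z : ℕ) (hZ : 2 ≤ Z) (h : ℝ) (hh : h = 1 / (Z : ℝ))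
    (A : Matrix (Fin (Z - 1)) (Fin (Z - 1)) ℝ)
    (hA : ∀ i j : Fin (Z - 1), A i j =
      if i = j then 2 / h ^ 2
      else if (i : ℕ) + 1 = (j : ℕ) ∨ (j : ℕ) + 1 = (i : ℕ) then -(1 / h ^ 2) else 0)
    (u : Fin (Z - 1) → ℝ) :
    let pcxu : ℝ → ℝ := fun x => ∑ i : Fin (Z - 1), Set.indicator
      (Set.Ico ((((i : ℕ) : ℝ) + 1/2) * h) ((((i : ℕ) : ℝ) + 3/2) * h)) (fun _ => u i) x
    let F : ℝ → ℝ := fun x => ∫ t in (0:ℝ)..x, pcxu t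
    let m : ℝ := ∫ x in (0:ℝ)..1, F x
    Real.sqrt (∫ x in (0:ℝ)..1, (F x - m) ^ 2) ≤
        Real.sqrt (h * ∑ i, (A⁻¹.mulVec u) i * u i) ∧
    Real.sqrt (h * ∑ i, (A⁻¹.mulVec u) i * u i) ≤
        3 * Real.sqrt (∫ x in (0:ℝ)..1, (F x - m) ^ 2) := by
  intro pcxu F m
  have hZR : (2:ℝ) ≤ (Z:ℝ) := by exact_mod_cast hZ
  have hhpos : 0 < h := by rw [hh]; positivity
  have hZh : (Z:ℝ) * h = 1 := by rw [hh]; field_simp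
  have hnZ : (Z - 1) + 1 = Z := by omega
  have hncast : ((Z-1 : ℕ):ℝ) = (Z:ℝ) - 1 := by
    push_cast [Nat.cast_sub (by omega : 1 ≤ Z)]; ring
  -- grid points
  set aa : ℕ → ℝ := fun k => ((k:ℝ) + 1/2) * h with haa
  set φ : ℕ → ℝ → ℝ := fun k x => min x (aa k + h) - min x (aa k) with hφ
  set μ : ℕ → ℝ := fun k => h*(1 - aa k - h/2) with hμ
  have haa0 : ∀ k : ℕ, 0 ≤ aa k := by
    intro k; simp only [haa]; positivity
  have haa1 : ∀ k : ℕ, k < Z - 1 → aa k + h ≤ 1 := by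
    intro k hk
    have hk' : (k:ℝ) ≤ (Z:ℝ) - 2 := by
      have : (k:ℕ) + 2 ≤ Z := by omega
      have := (Nat.cast_le (α := ℝ)).2 this
      push_cast at this; linarith
    simp only [haa]
    nlinarith [hhpos.le, hZh]
  have haalt : ∀ i j : ℕ, i < j → aa i + h ≤ aa j := by
    intro i j hij
    have : (i:ℝ) + 1 ≤ (j:ℝ) := by exact_mod_cast hij
    simp only [haa]; nlinarith [hhpos.le]
  have hφc : ∀ k : ℕ, Continuous (φ k) := fun k => phi_cont h (aa k)
  -- G
  set G : ℝ → ℝ := fun x => ∑ i : Fin (Z-1), u i * φ (i:ℕ) x with hG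
  have hGc : Continuous G := by
    apply continuous_finset_sum
    exact fun i _ => continuous_const.mul (hφc (i:ℕ))
  have hFG : ∀ x : ℝ, 0 ≤ x → F x = G x := by
    intro x hx
    show (∫ t in (0:ℝ)..x, ∑ i : Fin (Z - 1), Set.indicator
      (Set.Ico ((((i : ℕ) : ℝ) + 1/2) * h) ((((i : ℕ) : ℝ) + 3/2) * h)) (fun _ => u i) t) = G x
    rw [intervalIntegral.integral_finset_sum (fun i _ => indic_intable _ _ _ 0 x)]
    simp only [hG]
    apply Finset.sum_congr rfl
    intro i _
    rw [indic_integral _ _ _ x (haa0 (i:ℕ)) (by simp only [haa]; nlinarith [hhpos.le]) hx]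
    simp only [hφ, haa]
    rw [show (((i:ℕ):ℝ) + 3/2) * h = (((i:ℕ):ℝ) + 1/2) * h + h from by ring]
  have hmint : (∫ x in (0:ℝ)..1, G x) = m := by
    have : m = ∫ x in (0:ℝ)..1, F x := rfl
    rw [this]
    apply intervalIntegral.integral_congr
    intro x hx
    rw [Set.uIcc_of_le (by norm_num : (0:ℝ) ≤ 1)] at hx
    exact (hFG x hx.1).symm
  have hm : m = ∑ i : Fin (Z-1), u i * μ (i:ℕ) := by
    rw [← hmint]
    simp only [hG]
    rw [intervalIntegral.integral_finset_sum (f := fun (i : Fin (Z-1)) (x:ℝ) => u i * φ (i:ℕ) x)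
      (fun i _ => (continuous_const.mul (hφc (i:ℕ))).intervalIntegrable 0 1)]
    apply Finset.sum_congr rfl
    intro i _
    rw [intervalIntegral.integral_const_mul]
    congr 1
    have hv := int_phi h (aa (i:ℕ)) hhpos (haa0 (i:ℕ)) (haa1 (i:ℕ) i.isLt)
    simp only [hφ, hμ]
    exact hv
  -- the inverse matrix
  set B : Matrix (Fin (Z-1)) (Fin (Z-1)) ℝ := Matrix.of (fun i j =>
    h^3 * ((((min (i:ℕ) (j:ℕ)) : ℕ):ℝ) + 1) * ((Z:ℝ) - 1 - (((max (i:ℕ) (j:ℕ)) : ℕ):ℝ))) with hB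
  have hAB : A * B = 1 := by
    ext i k
    rw [Matrix.mul_apply]
    set C : ℕ → ℝ := fun p => h^3 * ((((min p ((k:ℕ)+1)) : ℕ):ℝ)
      * ((Z:ℝ) - (((max p ((k:ℕ)+1)) : ℕ):ℝ))) with hC
    have hC1 : ∀ j : Fin (Z-1), C ((j:ℕ)+1) = B j k := by
      intro j
      simp only [hC, hB, Matrix.of_apply]
      rw [show min ((j:ℕ)+1) ((k:ℕ)+1) = min (j:ℕ) (k:ℕ) + 1 from by omega,
        show max ((j:ℕ)+1) ((k:ℕ)+1) = max (j:ℕ) (k:ℕ) + 1 from by omega]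
      push_cast; ring
    have hC0 : C 0 = 0 := by
      simp only [hC]
      rw [show min 0 ((k:ℕ)+1) = 0 from by omega]
      simp
    have hCZ : C ((Z-1)+1) = 0 := by
      simp only [hC, hnZ]
      rw [show max Z ((k:ℕ)+1) = Z from by have := k.isLt; omega]
      simp
    rw [sumA (Z-1) h A hA (fun j => B j k) C hC1 hC0 hCZ i]
    have hg := gam_diff (Z:ℝ) (i:ℕ) (k:ℕ)
    have hstep : (2 * C ((i:ℕ)+1) - C (i:ℕ) - C ((i:ℕ)+2)) / h^2
        = h * (if (i:ℕ) = (k:ℕ) then (Z:ℝ) else 0) := by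
      rw [← hg]
      simp only [hC]
      field_simp
    rw [hstep, Matrix.one_apply]
    rcases eq_or_ne i k with rfl | hik
    · rw [if_pos rfl, if_pos rfl]
      linarith [hZh]
    · rw [if_neg hik, if_neg (by simpa [Fin.ext_iff] using hik), mul_zero]
  have hAinv : A⁻¹ = B := Matrix.inv_eq_right_inv hAB
  set S : ℝ := ∑ i, (A⁻¹.mulVec u) i * u i with hS
  -- value of pair integrals
  have hP : ∀ i j : Fin (Z-1), (∫ x in (0:ℝ)..1, φ (i:ℕ) x * φ (j:ℕ) x)
      = h*h*(1 - aa (max (i:ℕ) (j:ℕ)) - h) + (if i = j then h^3/3 else h^3/2) := by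
    have haux : ∀ i j : Fin (Z-1), (i:ℕ) ≤ (j:ℕ) →
        (∫ x in (0:ℝ)..1, φ (i:ℕ) x * φ (j:ℕ) x)
          = h*h*(1 - aa (max (i:ℕ) (j:ℕ)) - h) + (if i = j then h^3/3 else h^3/2) := by
      intro i j hij
      rcases eq_or_lt_of_le hij with heq | hlt
      · have hij' : i = j := Fin.ext heq
        subst hij'
        rw [if_pos rfl, max_self]
        have hv := int_phiphi_eq h (aa (i:ℕ)) hhpos (haa0 _) (haa1 _ i.isLt)
        simp only [hφ]
        rw [hv]; ring
      · have hne : i ≠ j := Fin.ne_of_val_ne (by omega)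
        rw [if_neg hne, max_eq_right hij]
        have hv := int_phiphi_lt h (aa (i:ℕ)) (aa (j:ℕ)) hhpos (haa0 _)
          (haalt _ _ hlt) (haa1 _ j.isLt)
        simp only [hφ]
        rw [hv]; ring
    intro i j
    rcases le_total (i:ℕ) (j:ℕ) with hle | hle
    · exact haux i j hle
    · have hcomm : (∫ x in (0:ℝ)..1, φ (i:ℕ) x * φ (j:ℕ) x)
          = ∫ x in (0:ℝ)..1, φ (j:ℕ) x * φ (i:ℕ) x := by
        apply intervalIntegral.integral_congr
        intro x _
        exact mul_comm _ _
      rcases eq_or_ne i j with rfl | hne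
      · exact haux i i le_rfl
      · rw [hcomm, haux j i hle, max_comm, if_neg (Ne.symm hne), if_neg hne]
  -- key identity
  have hZrr : (Z:ℝ) = 1/h := by field_simp; linarith [hZh]
  have hpair : ∀ i j : Fin (Z-1),
      (h*h*(1 - aa (max (i:ℕ) (j:ℕ)) - h) + (if i = j then h^3/3 else h^3/2))
        - μ (i:ℕ) * μ (j:ℕ)
      = h * B i j - (if i = j then h^3/6 else 0) := by
    intro i j
    rcases le_total (i:ℕ) (j:ℕ) with hle | hle
    · rw [max_eq_right hle]
      simp only [hB, Matrix.of_apply, hμ, haa]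
      rw [min_eq_left hle, max_eq_right hle]
      rcases eq_or_ne i j with rfl | hne
      · rw [if_pos rfl, if_pos rfl, hZrr]; field_simp; ring
      · rw [if_neg hne, if_neg hne, hZrr]; field_simp; ring
    · rw [max_eq_left hle]
      simp only [hB, Matrix.of_apply, hμ, haa]
      rw [min_eq_right hle, max_eq_left hle]
      rcases eq_or_ne i j with rfl | hne
      · rw [if_pos rfl, if_pos rfl, hZrr]; field_simp; ring
      · rw [if_neg hne, if_neg hne, hZrr]; field_simp; ring
  have hSB : h * S = ∑ i : Fin (Z-1), ∑ j : Fin (Z-1), (u i * u j) * (h * B i j) := by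
    rw [hS, hAinv]
    have hmv : ∀ i : Fin (Z-1), (B.mulVec u) i = ∑ j, B i j * u j := by
      intro i; simp [Matrix.mulVec, dotProduct]
    rw [Finset.mul_sum]
    apply Finset.sum_congr rfl
    intro i _
    rw [hmv i, Finset.sum_mul, Finset.mul_sum]
    apply Finset.sum_congr rfl
    intro j _
    ring
  have key : (∫ x in (0:ℝ)..1, (F x - m)^2) = h * S - h^3/6 * ∑ i, (u i)^2 := by
    have e1 : (∫ x in (0:ℝ)..1, (F x - m)^2) = ∫ x in (0:ℝ)..1, (G x - m)^2 := by
      apply intervalIntegral.integral_congr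
      intro x hx
      rw [Set.uIcc_of_le (by norm_num : (0:ℝ) ≤ 1)] at hx
      show (F x - m)^2 = (G x - m)^2
      rw [hFG x hx.1]
    have e2 : (fun x => (G x - m)^2) = fun x => (G x * G x - (2*m) * G x) + m^2 :=
      funext fun x => by ring
    have hGGi : IntervalIntegrable (fun x => G x * G x) volume 0 1 :=
      (hGc.mul hGc).intervalIntegrable 0 1
    have hmGi : IntervalIntegrable (fun x => (2*m) * G x) volume 0 1 :=
      (continuous_const.mul hGc).intervalIntegrable 0 1
    have e3 : (∫ x in (0:ℝ)..1, (G x - m)^2) = (∫ x in (0:ℝ)..1, G x * G x) - m^2 := by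
      rw [e2, intervalIntegral.integral_add (hGGi.sub hmGi) intervalIntegrable_const,
        intervalIntegral.integral_sub hGGi hmGi, intervalIntegral.integral_const_mul,
        hmint, intervalIntegral.integral_const]
      simp
      ring
    have hint2 : ∀ (i j : Fin (Z-1)),
        Continuous fun x => (u i * u j) * (φ (i:ℕ) x * φ (j:ℕ) x) :=
      fun i j => continuous_const.mul ((hφc _).mul (hφc _))
    have hGG : (∫ x in (0:ℝ)..1, G x * G x)
        = ∑ i : Fin (Z-1), ∑ j : Fin (Z-1),
            (u i * u j) * ∫ x in (0:ℝ)..1, φ (i:ℕ) x * φ (j:ℕ) x := by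
      have e4 : (fun x => G x * G x) = fun x => ∑ i : Fin (Z-1), ∑ j : Fin (Z-1),
          (u i * u j) * (φ (i:ℕ) x * φ (j:ℕ) x) := by
        funext x
        simp only [hG]
        rw [Finset.sum_mul_sum]
        exact Finset.sum_congr rfl fun i _ => Finset.sum_congr rfl fun j _ => by ring
      rw [e4, intervalIntegral.integral_finset_sum
        (f := fun (i : Fin (Z-1)) (x:ℝ) => ∑ j : Fin (Z-1), (u i * u j) * (φ (i:ℕ) x * φ (j:ℕ) x))
        (fun i _ => (continuous_finset_sum _ (fun j _ => hint2 i j)).intervalIntegrable _ _)]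
      apply Finset.sum_congr rfl
      intro i _
      rw [intervalIntegral.integral_finset_sum
        (f := fun (j : Fin (Z-1)) (x:ℝ) => (u i * u j) * (φ (i:ℕ) x * φ (j:ℕ) x))
        (fun j _ => (hint2 i j).intervalIntegrable _ _)]
      apply Finset.sum_congr rfl
      intro j _
      exact intervalIntegral.integral_const_mul _ _
    rw [e1, e3, hGG, hSB, hm, sq (∑ i : Fin (Z-1), u i * μ (i:ℕ)), Finset.sum_mul_sum]
    have hite : h^3/6 * ∑ i, (u i)^2 = ∑ i : Fin (Z-1), ∑ j : Fin (Z-1),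
        (if i = j then h^3/6 * (u i * u j) else 0) := by
      rw [Finset.mul_sum]
      apply Finset.sum_congr rfl
      intro i _
      rw [Finset.sum_ite_eq Finset.univ i (fun j => h^3/6 * (u i * u j)),
        if_pos (Finset.mem_univ i)]
      ring
    rw [hite, ← Finset.sum_sub_distrib, ← Finset.sum_sub_distrib]
    apply Finset.sum_congr rfl
    intro i _
    rw [← Finset.sum_sub_distrib, ← Finset.sum_sub_distrib]
    apply Finset.sum_congr rfl
    intro j _
    have hp := hpair i j
    rw [hP i j]
    rcases eq_or_ne i j with rfl | hne
    · simp only [eq_self_iff_true, if_true] at hp ⊢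
      linear_combination (u i * u i) * hp
    · simp only [if_neg hne] at hp ⊢
      linear_combination (u i * u j) * hp
  -- inverse estimate
  have key2 : h^2 * (∑ i, (u i)^2) ≤ 4 * S := by
    set w : Fin (Z-1) → ℝ := B.mulVec u with hw
    have hwS : S = ∑ i, w i * u i := by rw [hS, hAinv]
    have hAw : A.mulVec w = u := by
      rw [hw, Matrix.mulVec_mulVec, hAB, Matrix.one_mulVec]
    set W : ℕ → ℝ := fun p => if hp : 1 ≤ p ∧ p ≤ Z-1 then w ⟨p-1, by omega⟩ else 0 with hW
    have hWj : ∀ j : Fin (Z-1), W ((j:ℕ)+1) = w j := by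
      intro j
      simp only [hW]
      rw [dif_pos ⟨by omega, by have := j.isLt; omega⟩]
      congr 1
    have hW0 : W 0 = 0 := by simp [hW]
    have hWZ : W ((Z-1)+1) = 0 := by
      simp only [hW]
      rw [dif_neg (by omega)]
    set D : ℕ → ℝ := fun p => W (p+1) - W p with hD
    have hud : ∀ i : Fin (Z-1), u i = (D (i:ℕ) - D ((i:ℕ)+1)) / h^2 := by
      intro i
      conv_lhs => rw [← hAw]
      have hmv : (A.mulVec w) i = ∑ j, A i j * w j := by
        simp [Matrix.mulVec, dotProduct]
      rw [hmv, sumA (Z-1) h A hA w W hWj hW0 hWZ i]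
      simp only [hD]
      ring
    have htel : ∑ p ∈ Finset.range (Z-1), W (p+1) * (D p - D (p+1))
        = ∑ p ∈ Finset.range Z, (D p)^2 := by
      have hA1 : ∑ p ∈ Finset.range Z, W (p+1) * D p
          = ∑ p ∈ Finset.range (Z-1), W (p+1) * D p := by
        conv_lhs => rw [← hnZ]
        rw [Finset.sum_range_succ, hWZ, zero_mul, add_zero]
      have hA2 : ∑ p ∈ Finset.range Z, W p * D p
          = ∑ p ∈ Finset.range (Z-1), W (p+1) * D (p+1) := by
        conv_lhs => rw [← hnZ]
        rw [Finset.sum_range_succ', hW0, zero_mul, add_zero]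
      have : ∑ p ∈ Finset.range (Z-1), W (p+1) * (D p - D (p+1))
          = (∑ p ∈ Finset.range (Z-1), W (p+1) * D p)
            - ∑ p ∈ Finset.range (Z-1), W (p+1) * D (p+1) := by
        rw [← Finset.sum_sub_distrib]
        exact Finset.sum_congr rfl fun p _ => by ring
      rw [this, ← hA1, ← hA2, ← Finset.sum_sub_distrib]
      exact Finset.sum_congr rfl fun p _ => by simp only [hD]; ring
    have hSsum : S = (∑ p ∈ Finset.range Z, (D p)^2) / h^2 := by
      rw [hwS]
      have hterm : ∀ i : Fin (Z-1), w i * u i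
          = (fun p => W (p+1) * ((D p - D (p+1))/h^2)) (i:ℕ) := by
        intro i
        simp only []
        rw [hud i, ← hWj i]
      rw [Finset.sum_congr rfl (fun i _ => hterm i),
        Fin.sum_univ_eq_sum_range (fun p => W (p+1) * ((D p - D (p+1))/h^2)) (Z-1)]
      have : ∑ p ∈ Finset.range (Z-1), W (p+1) * ((D p - D (p+1))/h^2)
          = (∑ p ∈ Finset.range (Z-1), W (p+1) * (D p - D (p+1))) / h^2 := by
        rw [Finset.sum_div]
        exact Finset.sum_congr rfl fun p _ => by ring
      rw [this, htel]
    have hu2 : ∑ i, (u i)^2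
        = (∑ p ∈ Finset.range (Z-1), (D p - D (p+1))^2) / h^4 := by
      have hterm : ∀ i : Fin (Z-1), (u i)^2
          = (fun p => (D p - D (p+1))^2 / h^4) (i:ℕ) := by
        intro i
        simp only []
        rw [hud i, div_pow]
        congr 1
        ring
      rw [Finset.sum_congr rfl (fun i _ => hterm i),
        Fin.sum_univ_eq_sum_range (fun p => (D p - D (p+1))^2 / h^4) (Z-1),
        ← Finset.sum_div]
    have hbound : ∑ p ∈ Finset.range (Z-1), (D p - D (p+1))^2
        ≤ 4 * ∑ p ∈ Finset.range Z, (D p)^2 := by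
      have h1 : ∑ p ∈ Finset.range (Z-1), (D p - D (p+1))^2
          ≤ ∑ p ∈ Finset.range (Z-1), (2*(D p)^2 + 2*(D (p+1))^2) :=
        Finset.sum_le_sum (fun p _ => by nlinarith [sq_nonneg (D p + D (p+1))])
      have h2 : ∑ p ∈ Finset.range (Z-1), (D p)^2 ≤ ∑ p ∈ Finset.range Z, (D p)^2 :=
        Finset.sum_le_sum_of_subset_of_nonneg (Finset.range_subset_range.2 (by omega))
          (fun p _ _ => sq_nonneg _)
      have h3 : ∑ p ∈ Finset.range (Z-1), (D (p+1))^2 ≤ ∑ p ∈ Finset.range Z, (D p)^2 := by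
        have e5 : ∑ p ∈ Finset.range Z, (D p)^2
            = ∑ p ∈ Finset.range (Z-1), (D (p+1))^2 + (D 0)^2 := by
          conv_lhs => rw [← hnZ]
          rw [Finset.sum_range_succ']
        nlinarith [sq_nonneg (D 0)]
      have h4 : ∑ p ∈ Finset.range (Z-1), (2*(D p)^2 + 2*(D (p+1))^2)
          = 2*(∑ p ∈ Finset.range (Z-1), (D p)^2)
            + 2*(∑ p ∈ Finset.range (Z-1), (D (p+1))^2) := by
        rw [Finset.sum_add_distrib, Finset.mul_sum, Finset.mul_sum]
      linarith [h1, h2, h3, h4]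
    rw [hu2, hSsum]
    have hh2 : (0:ℝ) < h^2 := by positivity
    have e6 : h^2 * ((∑ p ∈ Finset.range (Z-1), (D p - D (p+1))^2)/h^4)
        = (∑ p ∈ Finset.range (Z-1), (D p - D (p+1))^2)/h^2 := by
      field_simp
    have e7 : 4 * ((∑ p ∈ Finset.range Z, (D p)^2)/h^2)
        = (4 * ∑ p ∈ Finset.range Z, (D p)^2)/h^2 := by ring
    rw [e6, e7, div_le_div_iff₀ hh2 hh2]
    exact mul_le_mul_of_nonneg_right hbound hh2.le
  -- conclusion
  have hintnn : 0 ≤ ∫ x in (0:ℝ)..1, (F x - m)^2 :=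
    intervalIntegral.integral_nonneg (by norm_num) (fun x _ => sq_nonneg _)
  have hsumnn : 0 ≤ ∑ i, (u i)^2 := Finset.sum_nonneg (fun i _ => sq_nonneg _)
  have t1 : 0 ≤ h^3/6 * ∑ i, (u i)^2 := mul_nonneg (by positivity) hsumnn
  have t2 : h^3 * (∑ i, (u i)^2) ≤ 4*(h*S) := by
    nlinarith [mul_le_mul_of_nonneg_left key2 hhpos.le]
  have hhS : (∫ x in (0:ℝ)..1, (F x - m)^2) ≤ h * S := by linarith [key, t1]
  constructor
  · exact Real.sqrt_le_sqrt hhS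
  · have h9 : h * S ≤ 9 * ∫ x in (0:ℝ)..1, (F x - m)^2 := by
      linarith [key, t1, t2, hintnn]
    calc Real.sqrt (h * S) ≤ Real.sqrt (9 * ∫ x in (0:ℝ)..1, (F x - m)^2) :=
          Real.sqrt_le_sqrt h9
      _ = 3 * Real.sqrt (∫ x in (0:ℝ)..1, (F x - m)^2) := by
          rw [Real.sqrt_mul (by norm_num : (0:ℝ) ≤ 9), show (9:ℝ) = 3^2 by norm_num,
            Real.sqrt_sq (by norm_num : (0:ℝ) ≤ 3)]
end

section
/- (Discrete contraction/energy estimate for the deterministic BTW scheme) Suppose $\tau/h^2 \leq 1/4$. Then the explicit Euler iteration $u^{n+1} = u^n + \tau\,\Delta_h \tilde\phi_1(u^n)$ with initial value $u^0 = u^* \in \mathbb{R}^{Z-1}$ satisfies $\max_{0 \leq n \leq N+1} \|u^n\|_{-1}^2 \leq \|u^*\|_{-1}^2$. -/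
/-!
Write `A = -D` and `E v = A⁻¹ v ⬝ v`. With `φ = φ̃₁(uⁿ)` the step is `uⁿ⁺¹ = uⁿ - τ A φ`, and for
symmetric `A` the energy expands as `E uⁿ⁺¹ = E uⁿ - 2τ uⁿ ⬝ φ + τ² φ ⬝ A φ`. Since
`φ ⬝ φ ≤ uⁿ ⬝ φ` and, by a Gershgorin-type bound on the row sums of `|A|`, `φ ⬝ A φ ≤ (4/h²) φ ⬝ φ`,
the CFL condition `4τ/h² ≤ 1` gives `τ² φ ⬝ A φ ≤ τ φ ⬝ φ ≤ τ uⁿ ⬝ φ`, so the energy does not increase.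
When `A` is singular, `A⁻¹ = 0` and there is nothing to prove.
-/

noncomputable def phi1 (x : ℝ) : ℝ := if 1 < x then 1 else if x < -1 then -1 else 0

open Matrix Finset

lemma phi1_mul_self_le (x : ℝ) : phi1 x * phi1 x ≤ x * phi1 x := by
  unfold phi1; split_ifs <;> nlinarith

section Energy

variable {n : Type*} [Fintype n]

lemma dotProduct_mulVec_self_le_of_sum_abs_le {M : Matrix n n ℝ} (hM : M.IsSymm) {c : ℝ}
    (hc : ∀ i, ∑ j, |M i j| ≤ c) (φ : n → ℝ) : φ ⬝ᵥ M *ᵥ φ ≤ c * (φ ⬝ᵥ φ) := by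
  have hswap : ∑ i, ∑ j, |M i j| * φ j ^ 2 = ∑ i, ∑ j, |M i j| * φ i ^ 2 := by
    rw [Finset.sum_comm]
    simp_rw [hM.apply]
  calc φ ⬝ᵥ M *ᵥ φ = ∑ i, ∑ j, φ i * M i j * φ j := by
        simp only [dotProduct, mulVec, Finset.mul_sum, mul_assoc]
    _ ≤ ∑ i, ∑ j, |M i j| * (φ i ^ 2 + φ j ^ 2) / 2 := by
        gcongr with i _ j _
        have hij : φ i * M i j * φ j ≤ |M i j| * (|φ i| * |φ j|) :=
          (le_abs_self _).trans_eq (by rw [abs_mul, abs_mul]; ring)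
        nlinarith [abs_nonneg (M i j), sq_nonneg (|φ i| - |φ j|), sq_abs (φ i), sq_abs (φ j)]
    _ = (∑ i, ∑ j, |M i j| * φ i ^ 2 + ∑ i, ∑ j, |M i j| * φ j ^ 2) / 2 := by
        simp only [mul_add, add_div, Finset.sum_add_distrib, Finset.sum_div]
    _ = ∑ i, ∑ j, |M i j| * φ i ^ 2 := by rw [hswap]; ring
    _ ≤ ∑ i, c * φ i ^ 2 := by
        gcongr with i _
        rw [← Finset.sum_mul]
        exact mul_le_mul_of_nonneg_right (hc i) (sq_nonneg _)
    _ = c * (φ ⬝ᵥ φ) := by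
        simp only [dotProduct, Finset.mul_sum, sq]

variable [DecidableEq n]

lemma inv_mulVec_dotProduct_sub_smul_mulVec {A : Matrix n n ℝ} (hA : A.IsSymm)
    (hdet : IsUnit A.det) (τ : ℝ) (v φ : n → ℝ) :
    A⁻¹ *ᵥ (v - τ • A *ᵥ φ) ⬝ᵥ (v - τ • A *ᵥ φ) =
      A⁻¹ *ᵥ v ⬝ᵥ v - 2 * τ * (v ⬝ᵥ φ) + τ ^ 2 * (φ ⬝ᵥ A *ᵥ φ) := by
  have hinv : A⁻¹ *ᵥ (A *ᵥ φ) = φ := by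
    rw [mulVec_mulVec, nonsing_inv_mul A hdet, one_mulVec]
  have hcross : A⁻¹ *ᵥ v ⬝ᵥ A *ᵥ φ = v ⬝ᵥ φ := by
    rw [dotProduct_mulVec, ← mulVec_transpose, hA.eq, mulVec_mulVec, mul_nonsing_inv A hdet,
      one_mulVec]
  simp only [mulVec_sub, mulVec_smul, hinv, sub_dotProduct, dotProduct_sub, smul_dotProduct,
    dotProduct_smul, hcross, dotProduct_comm φ v, smul_eq_mul]
  ring

lemma inv_mulVec_dotProduct_sub_smul_mulVec_le {A : Matrix n n ℝ} (hA : A.IsSymm) {τ : ℝ}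
    (hτ : 0 ≤ τ) {v φ : n → ℝ} (hφv : φ ⬝ᵥ φ ≤ v ⬝ᵥ φ) (hφA : τ * (φ ⬝ᵥ A *ᵥ φ) ≤ φ ⬝ᵥ φ) :
    A⁻¹ *ᵥ (v - τ • A *ᵥ φ) ⬝ᵥ (v - τ • A *ᵥ φ) ≤ A⁻¹ *ᵥ v ⬝ᵥ v := by
  by_cases hdet : IsUnit A.det
  · rw [inv_mulVec_dotProduct_sub_smul_mulVec hA hdet]
    have hφφ : 0 ≤ φ ⬝ᵥ φ := Finset.sum_nonneg fun i _ => mul_self_nonneg (φ i)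
    nlinarith [mul_le_mul_of_nonneg_left hφA hτ]
  · simp [nonsing_inv_apply_not_isUnit A hdet]

lemma inv_mulVec_dotProduct_phi1_step_le {A : Matrix n n ℝ} (hA : A.IsSymm) {c τ : ℝ}
    (hc : ∀ i, ∑ j, |A i j| ≤ c) (hτ : 0 ≤ τ) (hτc : τ * c ≤ 1) (v : n → ℝ) :
    A⁻¹ *ᵥ (v - τ • A *ᵥ fun i => phi1 (v i)) ⬝ᵥ (v - τ • A *ᵥ fun i => phi1 (v i)) ≤
      A⁻¹ *ᵥ v ⬝ᵥ v := by
  set φ : n → ℝ := fun i => phi1 (v i)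
  have hφφ : 0 ≤ φ ⬝ᵥ φ := Finset.sum_nonneg fun i _ => mul_self_nonneg (φ i)
  refine inv_mulVec_dotProduct_sub_smul_mulVec_le hA hτ
    (Finset.sum_le_sum fun i _ => phi1_mul_self_le (v i)) ?_
  calc τ * (φ ⬝ᵥ A *ᵥ φ) ≤ τ * (c * (φ ⬝ᵥ φ)) := by
        gcongr; exact dotProduct_mulVec_self_le_of_sum_abs_le hA hc φ
    _ = τ * c * (φ ⬝ᵥ φ) := (mul_assoc _ _ _).symm
    _ ≤ φ ⬝ᵥ φ := mul_le_of_le_one_left hφφ hτc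

end Energy

section Tridiagonal

variable {m : ℕ}

def tridiagonal (m : ℕ) (a b : ℝ) : Matrix (Fin m) (Fin m) ℝ :=
  of fun i j => if i = j then a else if (i : ℕ) + 1 = j ∨ (j : ℕ) + 1 = i then b else 0

lemma tridiagonal_isSymm (a b : ℝ) : (tridiagonal m a b).IsSymm := by
  ext i j
  simp only [transpose_apply, tridiagonal, of_apply, eq_comm (a := i), or_comm]

lemma sum_ite_val_eq_le (k : ℕ) {c : ℝ} (hc : 0 ≤ c) :
    ∑ j : Fin m, (if (j : ℕ) = k then c else 0) ≤ c := by
  rw [← Finset.sum_filter, Finset.sum_const, nsmul_eq_mul]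
  have hcard : (univ.filter fun j : Fin m => (j : ℕ) = k).card ≤ 1 :=
    Finset.card_le_one.mpr fun x hx y hy => by
      simp only [Finset.mem_filter] at hx hy
      exact Fin.ext (hx.2.trans hy.2.symm)
  exact mul_le_of_le_one_left hc (by exact_mod_cast hcard)

lemma sum_abs_tridiagonal_le (a b : ℝ) (i : Fin m) :
    ∑ j, |tridiagonal m a b i j| ≤ |a| + 2 * |b| := by
  have hentry : ∀ j : Fin m, |tridiagonal m a b i j| ≤ (if i = j then |a| else 0) +
      (if (j : ℕ) = i + 1 then |b| else 0) + (if (j : ℕ) = i - 1 then |b| else 0) := by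
    intro j
    have ha := abs_nonneg a
    have hb := abs_nonneg b
    simp only [tridiagonal, of_apply, Fin.ext_iff]
    split_ifs <;> first | omega | linarith [abs_zero (α := ℝ)]
  calc ∑ j, |tridiagonal m a b i j|
      ≤ ∑ j : Fin m, ((if i = j then |a| else 0) + (if (j : ℕ) = i + 1 then |b| else 0) +
          (if (j : ℕ) = i - 1 then |b| else 0)) := Finset.sum_le_sum fun j _ => hentry j
    _ ≤ |a| + |b| + |b| := by
        simp only [Finset.sum_add_distrib, Finset.sum_ite_eq, Finset.mem_univ, if_true]
        gcongr <;> exact sum_ite_val_eq_le _ (abs_nonneg b)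
    _ = |a| + 2 * |b| := by ring

end Tridiagonal

theorem stmt_16_general (Z N : ℕ) (h τ : ℝ) (hh : h = 1 / (Z : ℝ)) (hτ : 0 < τ)
    (hCFL : τ / h ^ 2 ≤ 1 / 4)
    (D : Matrix (Fin (Z - 1)) (Fin (Z - 1)) ℝ)
    (hD : ∀ i j : Fin (Z - 1), D i j =
      if i = j then -(2 / h ^ 2)
      else if (i : ℕ) + 1 = (j : ℕ) ∨ (j : ℕ) + 1 = (i : ℕ) then 1 / h ^ 2 else 0)
    (ustar : Fin (Z - 1) → ℝ) (u : ℕ → Fin (Z - 1) → ℝ)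
    (hu0 : u 0 = ustar)
    (hstep : ∀ n, u (n + 1) = u n + τ • (D.mulVec fun i => phi1 (u n i))) :
    ∀ n ≤ N + 1,
      h * ∑ i, ((-D)⁻¹.mulVec (u n)) i * u n i ≤
        h * ∑ i, ((-D)⁻¹.mulVec ustar) i * ustar i := by
  intro n _
  have hA : -D = tridiagonal (Z - 1) (2 / h ^ 2) (-(1 / h ^ 2)) := by
    ext i j
    rw [Matrix.neg_apply, hD]
    simp only [tridiagonal, of_apply]
    split_ifs <;> ring
  have hrow (i) : ∑ j, |tridiagonal (Z - 1) (2 / h ^ 2) (-(1 / h ^ 2)) i j| ≤ 4 / h ^ 2 :=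
    (sum_abs_tridiagonal_le _ _ i).trans_eq (by
      rw [abs_neg, abs_of_nonneg (by positivity), abs_of_nonneg (by positivity)]; ring)
  have hτc : τ * (4 / h ^ 2) ≤ 1 := by
    linarith [show τ * (4 / h ^ 2) = 4 * (τ / h ^ 2) by ring]
  have hdecay : Antitone fun k => (-D)⁻¹ *ᵥ u k ⬝ᵥ u k := by
    refine antitone_nat_of_succ_le fun k => ?_
    rw [hstep, ← sub_neg_eq_add, ← smul_neg, ← neg_mulVec, hA]
    exact inv_mulVec_dotProduct_phi1_step_le (tridiagonal_isSymm _ _) hrow hτ.le hτc (u k)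
  exact mul_le_mul_of_nonneg_left (hu0 ▸ hdecay (Nat.zero_le n)) (by rw [hh]; positivity)

/-- Discrete contraction/energy estimate for the explicit Euler scheme of the
deterministic BTW model: if `τ/h² ≤ 1/4` then `max_{n ≤ N+1} ‖uⁿ‖₋₁² ≤ ‖u*‖₋₁²`. -/
theorem stmt_16 (Z N : ℕ) (hZ : 2 ≤ Z) (h τ : ℝ) (hh : h = 1 / (Z : ℝ)) (hτ : 0 < τ)
    (hCFL : τ / h ^ 2 ≤ 1 / 4)
    (D : Matrix (Fin (Z - 1)) (Fin (Z - 1)) ℝ)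
    (hD : ∀ i j : Fin (Z - 1), D i j =
      if i = j then -(2 / h ^ 2)
      else if (i : ℕ) + 1 = (j : ℕ) ∨ (j : ℕ) + 1 = (i : ℕ) then 1 / h ^ 2 else 0)
    (ustar : Fin (Z - 1) → ℝ) (u : ℕ → Fin (Z - 1) → ℝ)
    (hu0 : u 0 = ustar)
    (hstep : ∀ n, u (n + 1) = u n + τ • (D.mulVec fun i => phi1 (u n i))) :
    ∀ n ≤ N + 1,
      h * ∑ i, ((-D)⁻¹.mulVec (u n)) i * u n i ≤
        h * ∑ i, ((-D)⁻¹.mulVec ustar) i * ustar i :=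
  stmt_16_general Z N h τ hh hτ hCFL D hD ustar u hu0 hstep
end
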